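/- For every N ∈ ℕ, every a, b > 0 and every x ∈ ℝ^N, ∫_{ℝ^N_<} f_N(a; x, y) 𝒩_N(b; y) dy = 𝒩_N(a+b; x). -/

import Mathlib

/-!
Both determinants are expanded by Leibniz' formula; integrating the product over all of `ℝ^N`
gives `N! * det[∫ p_a(x_i, u) p_b(u, z_j) du] = N! * f_N(a + b; x, z)` (Andreief's identity and
Chapman–Kolmogorov for the heat kernel). The integrand `f_N(a; x, y) f_N(b; y, z)` is invariant
under permutations of `y`, and up to a null set `ℝ^N` is the disjoint union of the `N!` permuted
copies of the chamber, so its integral over the chamber is `f_N(a + b; x, z)`. Integrating in `z`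
over the chamber and exchanging the integrals, which is legitimate because
`∫ |f_N(b; y, z)| dz ≤ N!`, gives the theorem.
-/

open MeasureTheory

/-- The heat kernel `p_t(x,y) = (2πt)^{-1/2} exp(-(x-y)²/(2t))`. -/
noncomputable def heatKernel (t x y : ℝ) : ℝ :=
  (1 / Real.sqrt (2 * Real.pi * t)) * Real.exp (-(x - y)^2 / (2 * t))

/-- The Weyl chamber `ℝ^N_< = {x : x_1 < x_2 < ⋯ < x_N}`. -/
def weylChamber (N : ℕ) : Set (Fin N → ℝ) := {x | StrictMono x}

/-- The Karlin–McGregor determinant `f_N(t; x, y) = det[p_t(x_i, y_j)]`. -/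
noncomputable def fKM (N : ℕ) (t : ℝ) (x y : Fin N → ℝ) : ℝ :=
  Matrix.det (Matrix.of fun i j => heatKernel t (x i) (y j))

/-- The non-colliding probability `𝒩_N(t; x) = ∫_{ℝ^N_<} f_N(t; x, y) dy`. -/
noncomputable def NKM (N : ℕ) (t : ℝ) (x : Fin N → ℝ) : ℝ :=
  ∫ y in weylChamber N, fKM N t x y

open Real

lemma heatKernel_eq_gaussian (t x y : ℝ) :
    heatKernel t x y = (√(2 * π * t))⁻¹ * exp (-(2 * t)⁻¹ * (y - x) ^ 2) := by
  rw [heatKernel, one_div]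
  ring_nf

lemma heatKernel_nonneg (t x y : ℝ) : 0 ≤ heatKernel t x y := by
  unfold heatKernel; positivity

@[fun_prop]
lemma Continuous.heatKernel {α : Type*} [TopologicalSpace α] (t : ℝ) {f g : α → ℝ}
    (hf : Continuous f) (hg : Continuous g) : Continuous fun p => heatKernel t (f p) (g p) := by
  unfold _root_.heatKernel; fun_prop

lemma integrable_heatKernel {t : ℝ} (ht : 0 < t) (x : ℝ) : Integrable (heatKernel t x) := by
  simp_rw [funext (heatKernel_eq_gaussian t x)]
  exact ((integrable_exp_neg_mul_sq (by positivity)).comp_sub_right x).const_mul _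

lemma integral_heatKernel {t : ℝ} (ht : 0 < t) (x : ℝ) : ∫ y, heatKernel t x y = 1 := by
  simp_rw [heatKernel_eq_gaussian, integral_const_mul,
    integral_sub_right_eq_self (fun u => exp (-(2 * t)⁻¹ * u ^ 2)) x, integral_gaussian]
  rw [div_inv_eq_mul, ← mul_assoc, mul_comm π 2, inv_mul_cancel₀ (by positivity)]

/-- Completing the square in `u`. -/
lemma heatKernel_mul_heatKernel {a b : ℝ} (ha : 0 < a) (hb : 0 < b) (x z u : ℝ) :
    heatKernel a x u * heatKernel b u z
      = heatKernel (a + b) x z * heatKernel (a * b / (a + b)) ((b * x + a * z) / (a + b)) u := by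
  rw [heatKernel, heatKernel, heatKernel, heatKernel, mul_mul_mul_comm (1 / √(2 * π * a)),
    mul_mul_mul_comm (1 / √(2 * π * (a + b))), ← exp_add, ← exp_add, one_div_mul_one_div,
    one_div_mul_one_div, ← sqrt_mul (by positivity), ← sqrt_mul (by positivity)]
  congr 1
  · congr 2
    field_simp
  · congr 1
    field_simp
    ring

lemma integrable_heatKernel_mul_heatKernel {a b : ℝ} (ha : 0 < a) (hb : 0 < b) (x z : ℝ) :
    Integrable fun u => heatKernel a x u * heatKernel b u z := by
  simp_rw [heatKernel_mul_heatKernel ha hb x z]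
  exact (integrable_heatKernel (by positivity) _).const_mul _

lemma integral_heatKernel_mul_heatKernel {a b : ℝ} (ha : 0 < a) (hb : 0 < b) (x z : ℝ) :
    ∫ u, heatKernel a x u * heatKernel b u z = heatKernel (a + b) x z := by
  simp_rw [heatKernel_mul_heatKernel ha hb x z]
  rw [integral_const_mul, integral_heatKernel (by positivity), mul_one]

open Equiv Matrix

section Leibniz

variable {n α R : Type*} [Fintype n] [DecidableEq n] [CommRing R]

lemma sign_mul_sign_self (σ : Perm n) : ((Perm.sign σ : ℤ) : R) * (Perm.sign σ : ℤ) = 1 := by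
  rw [← Int.cast_mul, ← Units.val_mul, Int.units_mul_self, Units.val_one, Int.cast_one]

lemma sum_sign_mul_sign_mul_prod (K : Matrix n n R) :
    ∑ σ : Perm n, ∑ τ : Perm n,
        ((Perm.sign σ : ℤ) * (Perm.sign τ : ℤ) : R) * ∏ i, K (σ i) (τ i)
      = (Fintype.card n).factorial * K.det := by
  have hrow : ∀ σ : Perm n,
      ∑ τ : Perm n, ((Perm.sign τ : ℤ) : R) * ∏ i, K (σ i) (τ i) = (Perm.sign σ : ℤ) * K.det :=
    fun σ => by
      rw [← det_permute, ← det_transpose, det_apply']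
      rfl
  simp_rw [mul_assoc, ← Finset.mul_sum, hrow, ← mul_assoc, sign_mul_sign_self, one_mul,
    Finset.sum_const, Finset.card_univ, Fintype.card_perm, nsmul_eq_mul]

lemma det_mul_det_eq_sum (f g : n → α → R) (y : n → α) :
    (of fun i j => f i (y j)).det * (of fun i j => g j (y i)).det
      = ∑ σ : Perm n, ∑ τ : Perm n,
          ((Perm.sign σ : ℤ) * (Perm.sign τ : ℤ) : R) *
            ∏ i, (f (σ i) (y i) * g (τ i) (y i)) := by
  rw [← det_transpose (of fun i j => g j (y i)), det_apply', det_apply', Finset.sum_mul_sum]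
  simp only [transpose_apply, of_apply, Finset.prod_mul_distrib]
  exact Finset.sum_congr rfl fun σ _ => Finset.sum_congr rfl fun τ _ => by ring

end Leibniz

section Symmetrization

open Function

lemma measurableSet_weylChamber (N : ℕ) : MeasurableSet (weylChamber N) := by
  simp only [weylChamber, StrictMono, Set.ofPred_forall]
  exact .iInter fun i => .iInter fun j => .iInter fun _ =>
    measurableSet_lt (measurable_pi_apply i) (measurable_pi_apply j)

lemma volume_setOf_not_injective {ι : Type*} [Fintype ι] [DecidableEq ι] :
    volume {y : ι → ℝ | ¬ Injective y} = 0 := by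
  have hdiag : ∀ i j : ι, i ≠ j → volume {y : ι → ℝ | y i = y j} = 0 := fun i j hij => by
    let φ : (ι → ℝ) →ₗ[ℝ] ℝ :=
      LinearMap.proj (R := ℝ) (φ := fun _ : ι => ℝ) i - LinearMap.proj j
    have hker : {y : ι → ℝ | y i = y j} = LinearMap.ker φ := by
      ext y; simp [φ, sub_eq_zero]
    rw [hker]
    refine Measure.addHaar_submodule _ _ fun htop => ?_
    rw [Submodule.eq_top_iff'] at htop
    simpa [φ, hij.symm] using htop (Pi.single i 1)
  refine measure_mono_null (fun y hy => ?_)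
    (measure_iUnion_null fun i => measure_iUnion_null fun j => measure_iUnion_null (hdiag i j))
  obtain ⟨i, j, hyij, hij⟩ : ∃ i j, y i = y j ∧ i ≠ j := by simpa [Injective] using hy
  exact Set.mem_iUnion₂.2 ⟨i, j, Set.mem_iUnion.2 ⟨hij, hyij⟩⟩

lemma measurePreserving_comp_perm {ι : Type*} [Fintype ι] (σ : Perm ι) :
    MeasurePreserving (fun y : ι → ℝ => y ∘ σ) :=
  volume_preserving_arrowCongr' σ.symm (MeasurableEquiv.refl ℝ) (.id _)

lemma measurableEmbedding_comp_perm {ι : Type*} [Fintype ι] (σ : Perm ι) :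
    MeasurableEmbedding (fun y : ι → ℝ => y ∘ σ) :=
  (MeasurableEquiv.arrowCongr' σ.symm (MeasurableEquiv.refl ℝ)).measurableEmbedding

lemma pairwise_disjoint_preimage_comp_weylChamber (N : ℕ) :
    Pairwise (Disjoint on fun σ : Perm (Fin N) => (· ∘ σ) ⁻¹' weylChamber N) := by
  intro σ τ hne
  refine Set.disjoint_left.2 fun y (hσ : StrictMono (y ∘ σ)) (hτ : StrictMono (y ∘ τ)) => hne ?_
  have hinj : Injective y := (σ.injective_comp y).1 hσ.injective
  exact Equiv.ext fun i => hinj (congrFun (Tuple.unique_monotone hσ.monotone hτ.monotone) i)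

/-- A tuple with distinct entries is sorted by some permutation; the others form a null set. -/
lemma ae_mem_iUnion_preimage_comp_weylChamber (N : ℕ) :
    ∀ᵐ y : Fin N → ℝ, y ∈ ⋃ σ : Perm (Fin N), (· ∘ σ) ⁻¹' weylChamber N := by
  refine measure_mono_null (fun y hy => ?_) volume_setOf_not_injective
  intro hinj
  exact hy (Set.mem_iUnion.2 ⟨Tuple.sort y,
    (Tuple.monotone_sort y).strictMono_of_injective (hinj.comp (Tuple.sort y).injective)⟩)

lemma integral_eq_factorial_mul_setIntegral_weylChamber {N : ℕ} {F : (Fin N → ℝ) → ℝ}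
    (hF : Integrable F) (hsym : ∀ (σ : Perm (Fin N)) y, F (y ∘ σ) = F y) :
    ∫ y, F y = N.factorial * ∫ y in weylChamber N, F y := by
  have hpiece : ∀ σ : Perm (Fin N),
      ∫ y in (· ∘ σ) ⁻¹' weylChamber N, F y = ∫ y in weylChamber N, F y := fun σ => by
    simpa only [hsym] using (measurePreserving_comp_perm σ).setIntegral_preimage_emb
      (measurableEmbedding_comp_perm σ) F (weylChamber N)
  calc ∫ y, F y = ∫ y in ⋃ σ : Perm (Fin N), (· ∘ σ) ⁻¹' weylChamber N, F y := by
        rw [Measure.restrict_eq_self_of_ae_mem (ae_mem_iUnion_preimage_comp_weylChamber N)]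
    _ = ∑ σ : Perm (Fin N), ∫ y in (· ∘ σ) ⁻¹' weylChamber N, F y := by
        rw [integral_iUnion (fun σ => (measurableSet_weylChamber N).preimage
            (measurePreserving_comp_perm σ).measurable)
          (pairwise_disjoint_preimage_comp_weylChamber N) hF.integrableOn, tsum_fintype]
    _ = N.factorial * ∫ y in weylChamber N, F y := by
        simp [hpiece, Fintype.card_perm]

end Symmetrization

lemma integrable_det_mul_det {ι : Type*} [Fintype ι] [DecidableEq ι] {f g : ι → ℝ → ℝ}
    (hfg : ∀ i j, Integrable fun u => f i u * g j u) :
    Integrable fun y : ι → ℝ =>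
      (of fun i j => f i (y j)).det * (of fun i j => g j (y i)).det := by
  simp_rw [det_mul_det_eq_sum]
  exact integrable_finsetSum _ fun σ _ => integrable_finsetSum _ fun τ _ =>
    (Integrable.fintype_prod fun i => hfg (σ i) (τ i)).const_mul _

lemma integral_det_mul_det {ι : Type*} [Fintype ι] [DecidableEq ι] {f g : ι → ℝ → ℝ}
    (hfg : ∀ i j, Integrable fun u => f i u * g j u) :
    ∫ y : ι → ℝ, (of fun i j => f i (y j)).det * (of fun i j => g j (y i)).det
      = (Fintype.card ι).factorial * (of fun i j => ∫ u, f i u * g j u).det := by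
  have hterm : ∀ σ τ : Perm ι, Integrable fun y : ι → ℝ =>
      ((Perm.sign σ : ℤ) * (Perm.sign τ : ℤ) : ℝ) * ∏ i, (f (σ i) (y i) * g (τ i) (y i)) :=
    fun σ τ => (Integrable.fintype_prod fun i => hfg (σ i) (τ i)).const_mul _
  simp_rw [det_mul_det_eq_sum]
  rw [integral_finsetSum _ fun σ _ => integrable_finsetSum _ fun τ _ => hterm σ τ]
  refine (Finset.sum_congr rfl fun σ _ => ?_).trans (sum_sign_mul_sign_mul_prod _)
  rw [integral_finsetSum _ fun τ _ => hterm σ τ]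
  refine Finset.sum_congr rfl fun τ _ => ?_
  rw [integral_const_mul, integral_fintype_prod_volume_eq_prod fun i u => f (σ i) u * g (τ i) u]
  rfl

/-- Andreief's identity on the Weyl chamber. -/
lemma setIntegral_weylChamber_det_mul_det {N : ℕ} {f g : Fin N → ℝ → ℝ}
    (hfg : ∀ i j, Integrable fun u => f i u * g j u) :
    ∫ y in weylChamber N, (of fun i j => f i (y j)).det * (of fun i j => g j (y i)).det
      = (of fun i j => ∫ u, f i u * g j u).det := by
  have hsym : ∀ (σ : Perm (Fin N)) (y : Fin N → ℝ),
      (of fun i j => f i ((y ∘ σ) j)).det * (of fun i j => g j ((y ∘ σ) i)).det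
        = (of fun i j => f i (y j)).det * (of fun i j => g j (y i)).det := fun σ y => by
    rw [show (of fun i j => f i ((y ∘ σ) j)) = (of fun i j => f i (y j)).submatrix id σ
        from rfl,
      show (of fun i j => g j ((y ∘ σ) i)) = (of fun i j => g j (y i)).submatrix σ id from rfl,
      det_permute, det_permute', mul_mul_mul_comm, sign_mul_sign_self, one_mul]
  have h := (integral_eq_factorial_mul_setIntegral_weylChamber (integrable_det_mul_det hfg)
    hsym).symm.trans (integral_det_mul_det hfg)
  rw [Fintype.card_fin] at h
  exact mul_left_cancel₀ (Nat.cast_ne_zero.2 N.factorial_ne_zero) h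

lemma setIntegral_weylChamber_fKM_mul_fKM {N : ℕ} {a b : ℝ} (ha : 0 < a) (hb : 0 < b)
    (x z : Fin N → ℝ) :
    ∫ y in weylChamber N, fKM N a x y * fKM N b y z = fKM N (a + b) x z := by
  simpa only [fKM, integral_heatKernel_mul_heatKernel ha hb] using
    setIntegral_weylChamber_det_mul_det (f := fun i => heatKernel a (x i))
      (g := fun j u => heatKernel b u (z j))
      fun i j => integrable_heatKernel_mul_heatKernel ha hb _ _

lemma abs_det_le_sum_prod_abs {n : Type*} [Fintype n] [DecidableEq n] (M : Matrix n n ℝ) :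
    |M.det| ≤ ∑ σ : Perm n, ∏ i, |M (σ i) i| := by
  rw [det_apply']
  refine (Finset.abs_sum_le_sum_abs _ _).trans (Finset.sum_le_sum fun σ _ => ?_)
  rw [abs_mul, Finset.abs_prod, ← Int.cast_abs, Int.isUnit_iff_abs_eq.1 (Units.isUnit _),
    Int.cast_one, one_mul]

lemma integrable_prod_mul_of_integral_norm_le {α β : Type*} [MeasurableSpace α]
    [MeasurableSpace β] {μ : Measure α} {ν : Measure β} [SFinite μ] [SFinite ν] {f : α → ℝ}
    {g : α × β → ℝ} {C : ℝ} (hf : Integrable f μ) (hg : AEStronglyMeasurable g (μ.prod ν))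
    (hgi : ∀ x, Integrable (fun y => g (x, y)) ν) (hC : ∀ x, ∫ y, ‖g (x, y)‖ ∂ν ≤ C) :
    Integrable (fun p => f p.1 * g p) (μ.prod ν) := by
  have hm : AEStronglyMeasurable (fun p => f p.1 * g p) (μ.prod ν) :=
    hf.aestronglyMeasurable.comp_fst.mul hg
  refine (integrable_prod_iff hm).2 ⟨ae_of_all _ fun x => (hgi x).const_mul (f x), ?_⟩
  refine (hf.norm.mul_const C).mono' hm.norm.integral_prod_right' (ae_of_all _ fun x => ?_)
  simp_rw [norm_mul, integral_const_mul]
  rw [Real.norm_of_nonneg (by positivity)]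
  exact mul_le_mul_of_nonneg_left (hC x) (norm_nonneg _)

section KarlinMcGregor

variable {N : ℕ} {t : ℝ}

lemma fKM_eq_sum (x y : Fin N → ℝ) :
    fKM N t x y = ∑ σ : Perm (Fin N), (Perm.sign σ : ℤ) * ∏ i, heatKernel t (x (σ i)) (y i) :=
  det_apply' _

lemma abs_fKM_le (x y : Fin N → ℝ) :
    |fKM N t x y| ≤ ∑ σ : Perm (Fin N), ∏ i, heatKernel t (x (σ i)) (y i) := by
  simpa only [fKM, of_apply, abs_of_nonneg (heatKernel_nonneg _ _ _)] using
    abs_det_le_sum_prod_abs (of fun i j => heatKernel t (x i) (y j))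

lemma integrable_fKM (ht : 0 < t) (x : Fin N → ℝ) : Integrable (fKM N t x) := by
  simp_rw [funext (fKM_eq_sum x)]
  exact integrable_finsetSum _ fun σ _ =>
    (Integrable.fintype_prod fun i => integrable_heatKernel ht (x (σ i))).const_mul _

lemma integral_norm_fKM_le (ht : 0 < t) (x : Fin N → ℝ) :
    ∫ y, ‖fKM N t x y‖ ≤ N.factorial := by
  have hprod : ∀ σ : Perm (Fin N),
      Integrable fun y : Fin N → ℝ => ∏ i, heatKernel t (x (σ i)) (y i) :=
    fun σ => Integrable.fintype_prod fun i => integrable_heatKernel ht (x (σ i))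
  calc ∫ y, ‖fKM N t x y‖
      ≤ ∫ y : Fin N → ℝ, ∑ σ : Perm (Fin N), ∏ i, heatKernel t (x (σ i)) (y i) :=
        integral_mono (integrable_fKM ht x).norm (integrable_finsetSum _ fun σ _ => hprod σ)
          fun y => (Real.norm_eq_abs _).trans_le (abs_fKM_le x y)
    _ = N.factorial := by
        rw [integral_finsetSum _ fun σ _ => hprod σ]
        simp [integral_fintype_prod_volume_eq_prod, integral_heatKernel ht, Fintype.card_perm]

lemma continuous_fKM : Continuous fun p : (Fin N → ℝ) × (Fin N → ℝ) => fKM N t p.1 p.2 := by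
  refine Continuous.matrix_det (continuous_matrix fun i j => ?_)
  fun_prop

lemma integrable_fKM_mul_fKM {a b : ℝ} (ha : 0 < a) (hb : 0 < b) (x : Fin N → ℝ) :
    Integrable (fun p : (Fin N → ℝ) × (Fin N → ℝ) => fKM N a x p.1 * fKM N b p.1 p.2)
      (volume.prod volume) :=
  integrable_prod_mul_of_integral_norm_le (integrable_fKM ha x)
    continuous_fKM.aestronglyMeasurable (integrable_fKM hb) (integral_norm_fKM_le hb)

end KarlinMcGregor

/-- Semigroup property for the non-colliding probability:
`∫_{ℝ^N_<} f_N(a; x, y) 𝒩_N(b; y) dy = 𝒩_N(a+b; x)`. -/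
theorem karlinMcGregor_nonColliding_semigroup (N : ℕ) (a b : ℝ) (ha : 0 < a) (hb : 0 < b)
    (x : Fin N → ℝ) :
    ∫ y in weylChamber N, fKM N a x y * NKM N b y = NKM N (a + b) x := by
  have hint : Integrable (Function.uncurry fun y z => fKM N a x y * fKM N b y z)
      ((volume.restrict (weylChamber N)).prod (volume.restrict (weylChamber N))) := by
    rw [Measure.prod_restrict]
    exact (integrable_fKM_mul_fKM ha hb x).restrict
  calc ∫ y in weylChamber N, fKM N a x y * NKM N b y
      = ∫ y in weylChamber N, ∫ z in weylChamber N, fKM N a x y * fKM N b y z := by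
        simp_rw [NKM, integral_const_mul]
    _ = ∫ z in weylChamber N, ∫ y in weylChamber N, fKM N a x y * fKM N b y z :=
        integral_integral_swap hint
    _ = NKM N (a + b) x := by
        simp_rw [setIntegral_weylChamber_fKM_mul_fKM ha hb]
        rfl
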